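/- With the graph G_c constructed from a bipartite graph H = (A ⊔ B, E) with colorings α : A → [Δs], β : B → [d] and parameters c, t, Δ, s as in the context, assume s ≥ 2, assume that for every color b ∈ [d] the set {v ∈ B : β(v) = b} is nonempty, and let m be a natural number such that every (Δ(s−1)+1)-element subset of A has at most m common neighbors in B. Assume further the numerical conditions: c·d^c/(3t) ≤ d^{1/(2Δs)}, m ≤ d^{1/(2s)}/3, and c·d^c + c·Δ^c·s^c·d^{c − 1/2 + 1/(2s)} < 2·Δ^c·d^c. Then every dominating set of G_c has size strictly greater than c·d^c/3. -/

import Mathlib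

/-!
Suppose `D` dominates `G_c` and `|D| ≤ c·d^c/3`. Each `V_k` is dominated from inside its own colour
class `k ∈ [d]^c` (by a vertex of `V_k` or some `w_{v,j,i}` with `v ∈ V_k`), so `d^c ≤ |D|` and
`c ≥ 3`; and by pigeonhole some layer `i ∈ [t]` meets `D` in at most `|D|/t ≤ d^{1/(2Δs)}` vertices
of `C ∪ W`. Call `b ∈ B` rich in column `ℓ` if its neighbours `u` with `(u, ℓ, i) ∈ D` carry at
least `q = Δ(s-1)+1` colours of `α`; every such `b` is a common neighbour of `q` of them, so there
are at most `|D_i|^q·m ≤ √d·d^{1/(2s)}/3` rich vertices per column.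

Let `k` be a class with no coordinate coloured like a rich vertex and with fewer than `c` vertices
of `D` in `V_k`. Choosing `v ∈ V_k` diagonally, it agrees in some coordinate with each of those
vertices, and since no `v ℓ` is rich there is `j` with `j ℓ` avoiding the colours of the
`D`-neighbours of `v ℓ` in column `ℓ`. Then `w_{v,j,i}` has no neighbour in `D`, so it lies in the
layer `i`. Counting classes, `d^c ≤ |D_i| + c·(#rich)·d^{c-1} + |D|/c`, and the numerical
hypotheses make the right-hand side smaller than `d^c`.
-/

/-- A set `D` of vertices dominates a graph `G`: every vertex is in `D` or
adjacent to a vertex of `D`. -/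
def IsDominatingSet {V : Type*} (G : SimpleGraph V) (D : Set V) : Prop :=
  ∀ v : V, v ∈ D ∨ ∃ u ∈ D, G.Adj u v

/-- The vertex set of the graph `G_c`: the disjoint union of
`⋃_{i ∈ [d]^c} V_i = B^c` (a tuple `v ∈ B^c` lies in `V_i` for `i = β ∘ v`),
`C = A × [c] × [t]`, and `W = {w_{v,j,i} : v ∈ B^c, j ∈ [Δs]^c, i ∈ [t]}`. -/
abbrev GcVertex (A B : Type*) (c t Δ s : ℕ) : Type _ :=
  (Fin c → B) ⊕ ((A × Fin c × Fin t) ⊕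
    ((Fin c → B) × (Fin c → Fin (Δ * s)) × Fin t))

/-- The defining relation for the edges of `G_c` (to be symmetrized):
(E1) distinct `v, v'` of the same `V_i` (i.e. `β ∘ v = β ∘ v'`) are adjacent;
(E2) for `v, v'` in the same `V_i` with `v ℓ ≠ v' ℓ` for all `ℓ`, `w_{v,j,i}`
     is adjacent to `v'` for all `i ∈ [t]`, `j ∈ [Δs]^c`;
(E3) `(u, ℓ, i)` is adjacent to `w_{v,j,i}` if `E u (v ℓ)` and `j ℓ = α u`;
(E4) distinct `(u, ℓ, i), (u', ℓ, i)` with the same `ℓ, i` are adjacent. -/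
def gcRel {A B : Type*} (c t Δ s d : ℕ) (α : A → Fin (Δ * s))
    (β : B → Fin d) (E : A → B → Prop) :
    GcVertex A B c t Δ s → GcVertex A B c t Δ s → Prop
  | Sum.inl v, Sum.inl v' => v ≠ v' ∧ β ∘ v = β ∘ v'
  | Sum.inr (Sum.inr (v, _, _)), Sum.inl v' =>
      β ∘ v = β ∘ v' ∧ ∀ ℓ : Fin c, v ℓ ≠ v' ℓ
  | Sum.inr (Sum.inl (u, ℓ, i)), Sum.inr (Sum.inr (v, j, i')) =>
      i = i' ∧ E u (v ℓ) ∧ j ℓ = α u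
  | Sum.inr (Sum.inl (u, ℓ, i)), Sum.inr (Sum.inl (u', ℓ', i')) =>
      u ≠ u' ∧ ℓ = ℓ' ∧ i = i'
  | _, _ => False

/-- The graph `G_c` built from the bipartite graph `(A ⊔ B, E)` with colorings
`α : A → [Δs]`, `β : B → [d]` and parameters `c, t, Δ, s`. -/
def Gc {A B : Type*} (c t Δ s d : ℕ) (α : A → Fin (Δ * s))
    (β : B → Fin d) (E : A → B → Prop) :
    SimpleGraph (GcVertex A B c t Δ s) :=
  SimpleGraph.fromRel (gcRel c t Δ s d α β E)

open Finset

section Counting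
variable {ι β : Type*} [Fintype ι] [DecidableEq ι] [Fintype β] [DecidableEq β]

theorem card_filter_apply_mem (i : ι) (W : Finset β) :
    #{f : ι → β | f i ∈ W} = #W * Fintype.card β ^ (Fintype.card ι - 1) := by
  have : ({f : ι → β | f i ∈ W} : Finset _) =
      Fintype.piFinset (Function.update (fun _ => univ) i W) := by
    ext f
    simp only [mem_filter, mem_univ, true_and, Fintype.mem_piFinset]
    refine ⟨fun hf k => ?_, fun hf => by simpa using hf i⟩
    rcases eq_or_ne k i with rfl | hk <;> simp_all
  rw [this, Fintype.card_piFinset, prod_eq_mul_prod_sdiff_singleton_of_mem (mem_univ i),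
    Function.update_self]
  congr 1
  rw [← card_singleton i, ← card_univ_sdiff, ← card_univ, ← prod_const]
  exact prod_congr rfl fun k hk => by simp_all

theorem card_filter_exists_apply_mem_le {N : ℕ} (W : ι → Finset β) (hW : ∀ i, #(W i) ≤ N) :
    #{f : ι → β | ∃ i, f i ∈ W i} ≤
      Fintype.card ι * N * Fintype.card β ^ (Fintype.card ι - 1) := by
  calc #{f : ι → β | ∃ i, f i ∈ W i}
      ≤ #(univ.biUnion fun i => {f : ι → β | f i ∈ W i}) :=
        card_le_card fun f hf => by simpa using hf
    _ ≤ ∑ i, #{f : ι → β | f i ∈ W i} := card_biUnion_le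
    _ ≤ ∑ _i : ι, N * Fintype.card β ^ (Fintype.card ι - 1) := by
        gcongr with i; rw [card_filter_apply_mem]; gcongr; exact hW i
    _ = _ := by rw [sum_const, card_univ, smul_eq_mul, mul_assoc]

end Counting

theorem exists_mul_card_filter_eq_some_le {α κ : Type*} [Fintype κ] [Nonempty κ] [DecidableEq κ]
    (s : Finset α) (f : α → Option κ) :
    ∃ k, Fintype.card κ * #{a ∈ s | f a = some k} ≤ #s := by
  have hsum : ∑ k : κ, #{a ∈ s | f a = some k} ≤ #s :=
    calc ∑ k : κ, #{a ∈ s | f a = some k} = #{a ∈ s | f a ∈ univ.map .some} := by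
          rw [← sum_card_fiberwise_eq_card_filter, sum_map]; rfl
      _ ≤ #s := card_filter_le _ _
  obtain ⟨k, -, hk⟩ := exists_le_of_sum_le (f := fun k => Fintype.card κ * #{a ∈ s | f a = some k})
    (g := fun _ => #s) univ_nonempty (by
      rw [← mul_sum, sum_const, card_univ, smul_eq_mul]; gcongr)
  exact ⟨k, hk⟩

theorem mul_card_filter_le_card_filter_le {α κ : Type*} [Fintype κ] [DecidableEq κ]
    (s : Finset α) (f : α → κ) (n : ℕ) :
    n * #{k | n ≤ #{a ∈ s | f a = k}} ≤ #s :=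
  calc n * #{k | n ≤ #{a ∈ s | f a = k}} = ∑ _k ∈ {k | n ≤ #{a ∈ s | f a = k}}, n := by
        rw [sum_const, smul_eq_mul, mul_comm]
    _ ≤ ∑ k ∈ {k | n ≤ #{a ∈ s | f a = k}}, #{a ∈ s | f a = k} :=
        sum_le_sum fun k hk => (mem_filter.1 hk).2
    _ ≤ ∑ k, #{a ∈ s | f a = k} := sum_le_sum_of_subset (subset_univ _)
    _ = #s := (card_eq_sum_card_fiberwise fun a _ => mem_univ (f a)).symm

section ColorRich
variable {A B κ : Type*} [Fintype B] [DecidableEq κ] (α : A → κ) (E : A → B → Prop) [DecidableRel E]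

def colorRich (S : Finset A) (q : ℕ) : Finset B := {b | q ≤ #({u ∈ S | E u b}.image α)}

variable {α E}

theorem card_colorRich_le [DecidableEq B] {S : Finset A} {q m : ℕ}
    (hm : ∀ T ⊆ S, #T = q → #{b | ∀ u ∈ T, E u b} ≤ m) :
    #(colorRich α E S q) ≤ (#S).choose q * m := by
  calc #(colorRich α E S q)
      ≤ #((S.powersetCard q).biUnion fun T => {b | ∀ u ∈ T, E u b}) := by
        refine card_le_card fun b hb => ?_
        obtain ⟨T, hTS, hT⟩ := exists_subset_card_eq ((mem_filter.1 hb).2.trans card_image_le)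
        exact mem_biUnion.2 ⟨T, mem_powersetCard.2 ⟨hTS.trans (filter_subset _ _), hT⟩,
          by simpa using fun u hu => (mem_filter.1 (hTS hu)).2⟩
    _ ≤ ∑ T ∈ S.powersetCard q, #{b | ∀ u ∈ T, E u b} := card_biUnion_le
    _ ≤ ∑ _T ∈ S.powersetCard q, m := sum_le_sum fun T hT =>
        hm T (mem_powersetCard.1 hT).1 (mem_powersetCard.1 hT).2
    _ = (#S).choose q * m := by rw [sum_const, card_powersetCard, smul_eq_mul]

theorem exists_ne_of_notMem_colorRich [Fintype κ] {S : Finset A} {q : ℕ} {b : B}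
    (hb : b ∉ colorRich α E S q) (hq : q ≤ Fintype.card κ) :
    ∃ a, ∀ u ∈ S, E u b → α u ≠ a := by
  have hlt : #({u ∈ S | E u b}.image α) < #(univ : Finset κ) := by
    simp only [colorRich, mem_filter, mem_univ, true_and, not_le] at hb
    rw [card_univ]; omega
  obtain ⟨a, -, ha⟩ := exists_mem_notMem_of_card_lt_card hlt
  exact ⟨a, fun u hu hE hua => ha (mem_image.2 ⟨u, mem_filter.2 ⟨hu, hE⟩, hua⟩)⟩

end ColorRich

theorem exists_forall_exists_apply_eq_of_card_le {ι B : Type*} [Fintype ι] (P : ι → B → Prop)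
    (R : Finset (ι → B)) (hR : #R ≤ Fintype.card ι) (hRP : ∀ r ∈ R, ∀ i, P i (r i))
    (g : ι → B) (hg : ∀ i, P i (g i)) :
    ∃ v : ι → B, (∀ i, P i (v i)) ∧ ∀ r ∈ R, ∃ i, v i = r i := by
  obtain ⟨e⟩ := Function.Embedding.nonempty_of_card_le (α := R) (β := ι) (by simpa using hR)
  -- `v` takes its `e r`-th coordinate from `r`, and the remaining ones from `g`.
  refine ⟨fun i => Function.extend e (fun r => (r : ι → B)) (fun _ => g) i i, fun i => ?_,
    fun r hr => ⟨e ⟨r, hr⟩, by dsimp only; rw [e.injective.extend_apply]⟩⟩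
  by_cases h : ∃ r, e r = i
  · obtain ⟨r, rfl⟩ := h
    dsimp only; rw [e.injective.extend_apply]; exact hRP r r.2 _
  · dsimp only; rw [Function.extend_apply' _ _ _ h]; exact hg i

theorem rpow_natCast_sub_half_add {x : ℝ} (hx : 0 < x) {n : ℕ} (hn : 1 ≤ n) (y : ℝ) :
    x ^ ((n : ℝ) - 1 / 2 + y) = x ^ (n - 1) * (√x * x ^ y) := by
  rw [Real.sqrt_eq_rpow, ← Real.rpow_natCast, ← Real.rpow_add hx, ← Real.rpow_add hx,
    Nat.cast_sub hn]
  ring_nf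

theorem rpow_one_div_two_mul_pow_le_sqrt {x n : ℝ} (hx : 1 ≤ x) (hn : 0 < n) {q : ℕ}
    (hq : (q : ℝ) ≤ n) : (x ^ (1 / (2 * n))) ^ q ≤ √x := by
  rw [← Real.rpow_natCast, ← Real.rpow_mul (by linarith), Real.sqrt_eq_rpow]
  refine Real.rpow_le_rpow_of_exponent_le hx ?_
  rw [div_mul_eq_mul_div, one_mul, div_le_div_iff₀ (by positivity) two_pos]
  linarith

theorem add_mul_pow_add_third_lt_pow {c s : ℕ} {x R N G : ℝ} (hc : 3 ≤ c) (hs : 2 ≤ s)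
    (hx : 1 ≤ x) (hR : √x ≤ R) (hN : N ≤ R / 3) (hG : G ≤ √x)
    (hkey : c * s ^ c * (x ^ (c - 1) * R) < 2 * x ^ c) :
    G + c * N * x ^ (c - 1) + x ^ c / 3 < x ^ c := by
  have hxc : x ^ c = x ^ (c - 1) * x := by rw [← pow_succ, Nat.sub_add_cancel (by omega)]
  have hpow : 0 < x ^ (c - 1) := by positivity
  have hc3 : (3 : ℝ) ≤ c := by exact_mod_cast hc
  -- `c·s^c ≥ 24` puts both `c·N·x^(c-1)` and `√x` below `x^c/12`.
  have hs8 : (8 : ℝ) ≤ s ^ c :=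
    calc (8 : ℝ) = 2 ^ 3 := by norm_num
      _ ≤ 2 ^ c := pow_le_pow_right₀ (by norm_num) hc
      _ ≤ s ^ c := pow_le_pow_left₀ (by norm_num) (by exact_mod_cast hs) c
  have hR0 : 0 ≤ R := (Real.sqrt_nonneg x).trans hR
  have hcR : 8 * (c * (x ^ (c - 1) * R)) < 2 * x ^ c :=
    calc 8 * (c * (x ^ (c - 1) * R)) ≤ s ^ c * (c * (x ^ (c - 1) * R)) := by gcongr
      _ < 2 * x ^ c := by linarith
  have hX : c * N * x ^ (c - 1) ≤ x ^ c / 12 := by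
    have : c * N * x ^ (c - 1) ≤ c * (R / 3) * x ^ (c - 1) := by gcongr
    nlinarith
  have hroot : √x ≤ x / 12 := by
    have h24 : 24 * (x ^ (c - 1) * √x) < 2 * (x ^ (c - 1) * x) := by
      rw [← hxc]
      calc 24 * (x ^ (c - 1) * √x) ≤ c * s ^ c * (x ^ (c - 1) * R) := by
            gcongr; nlinarith
        _ < 2 * x ^ c := hkey
    nlinarith
  have hxP : x ≤ x ^ c := le_self_pow₀ hx (by omega)
  linarith

theorem add_mul_pow_add_third_lt_pow_of_rpow_le {c s Δ q L m : ℕ} {x : ℝ} (hc : 3 ≤ c)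
    (hs : 2 ≤ s) (hΔ : 0 < Δ) (hq : q ≤ Δ * s) (hx : 1 ≤ x)
    (hL : (L : ℝ) ≤ x ^ ((1 : ℝ) / (2 * Δ * s))) (hm : (m : ℝ) ≤ x ^ ((1 : ℝ) / (2 * s)) / 3)
    (h3 : (c : ℝ) * x ^ c + c * (Δ : ℝ) ^ c * (s : ℝ) ^ c * x ^ ((c : ℝ) - 1 / 2 + 1 / (2 * s))
      < 2 * (Δ : ℝ) ^ c * x ^ c) :
    L + c * ((L ^ q * m : ℕ) : ℝ) * x ^ (c - 1) + x ^ c / 3 < x ^ c := by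
  have hΔs : (0 : ℝ) < Δ * s := by
    have : 0 < Δ * s := by positivity
    exact_mod_cast this
  rw [mul_assoc] at hL
  have hLroot : (L : ℝ) ≤ √x := hL.trans <| by
    simpa using rpow_one_div_two_mul_pow_le_sqrt hx (q := 1) hΔs
      (by exact_mod_cast Nat.one_le_iff_ne_zero.2 (by positivity))
  have hN : ((L ^ q * m : ℕ) : ℝ) ≤ √x * x ^ ((1 : ℝ) / (2 * s)) / 3 := by
    rw [mul_div_assoc]
    push_cast
    gcongr
    exact (pow_le_pow_left₀ (by positivity) hL q).trans
      (rpow_one_div_two_mul_pow_le_sqrt hx hΔs (by exact_mod_cast hq))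
  have hkey : c * s ^ c * (x ^ (c - 1) * (√x * x ^ ((1 : ℝ) / (2 * s)))) < 2 * x ^ c := by
    rw [rpow_natCast_sub_half_add (by positivity) (by omega)] at h3
    have : (0 : ℝ) < Δ ^ c := by positivity
    nlinarith [show (0 : ℝ) ≤ c * x ^ c by positivity]
  exact add_mul_pow_add_third_lt_pow hc hs hx
    (le_mul_of_one_le_right (Real.sqrt_nonneg _) (Real.one_le_rpow hx (by positivity)))
    hN hLroot hkey

namespace Gc
variable {A B : Type*} {c t Δ s d : ℕ} {α : A → Fin (Δ * s)} {β : B → Fin d} {E : A → B → Prop}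

def layer : GcVertex A B c t Δ s → Option (Fin t)
  | .inl _ => none
  | .inr (.inl (_, _, i)) => some i
  | .inr (.inr (_, _, i)) => some i

def colorClass (β : B → Fin d) : GcVertex A B c t Δ s → Option (Fin c → Fin d)
  | .inl v => some (β ∘ v)
  | .inr (.inl _) => none
  | .inr (.inr (v, _, _)) => some (β ∘ v)

theorem colorClass_eq_of_adj_inl {x : GcVertex A B c t Δ s} {v : Fin c → B}
    (h : (Gc c t Δ s d α β E).Adj x (.inl v)) : colorClass β x = some (β ∘ v) := by
  rcases x with v' | ⟨u, ℓ, i⟩ | ⟨v', j, i⟩ <;>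
    simp only [Gc, SimpleGraph.fromRel_adj, gcRel, colorClass] at h ⊢ <;> grind

theorem of_adj_inr_inr {x : GcVertex A B c t Δ s} {v : Fin c → B} {j : Fin c → Fin (Δ * s)}
    {i : Fin t} (h : (Gc c t Δ s d α β E).Adj x (.inr (.inr (v, j, i)))) :
    (∃ v', x = .inl v' ∧ β ∘ v' = β ∘ v ∧ ∀ ℓ, v ℓ ≠ v' ℓ) ∨
      ∃ u ℓ, x = .inr (.inl (u, ℓ, i)) ∧ E u (v ℓ) ∧ j ℓ = α u := by
  rcases x with v' | ⟨u, ℓ, i'⟩ | ⟨v', j', i'⟩ <;>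
    simp only [Gc, SimpleGraph.fromRel_adj, gcRel] at h <;> grind

variable (D : Finset (GcVertex A B c t Δ s))

noncomputable def cSlice (i : Fin t) (ℓ : Fin c) : Finset A :=
  D.preimage (fun u => .inr (.inl (u, ℓ, i))) (by intro _ _ _ _ h; simpa using h)

noncomputable def vPart : Finset (Fin c → B) :=
  D.preimage .inl Sum.inl_injective.injOn

variable {D}

@[simp]
theorem mem_cSlice {i : Fin t} {ℓ : Fin c} {u : A} : u ∈ cSlice D i ℓ ↔ .inr (.inl (u, ℓ, i)) ∈ D :=
  mem_preimage

@[simp]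
theorem mem_vPart {v : Fin c → B} : v ∈ vPart D ↔ .inl v ∈ D :=
  mem_preimage

theorem card_cSlice_le (i : Fin t) (ℓ : Fin c) : #(cSlice D i ℓ) ≤ #{x ∈ D | layer x = some i} :=
  card_le_card_of_injOn (fun u => .inr (.inl (u, ℓ, i)))
    (fun u hu => mem_filter.2 ⟨mem_cSlice.1 hu, rfl⟩) (by intro _ _ _ _ h; simpa using h)

theorem card_vPart_le : #(vPart D) ≤ #D :=
  card_le_card_of_injOn Sum.inl (fun v hv => by simpa using hv) Sum.inl_injective.injOn

theorem exists_mem_colorClass_eq (hD : IsDominatingSet (Gc c t Δ s d α β E) D)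
    (v : Fin c → B) : ∃ x ∈ D, colorClass β x = some (β ∘ v) := by
  rcases hD (.inl v) with h | ⟨x, hx, hadj⟩
  · exact ⟨_, h, rfl⟩
  · exact ⟨x, hx, colorClass_eq_of_adj_inl hadj⟩

theorem pow_le_card (hβ : Function.Surjective β) (hD : IsDominatingSet (Gc c t Δ s d α β E) D) :
    d ^ c ≤ #D :=
  calc d ^ c = #(univ.map (.some : (Fin c → Fin d) ↪ _)) := by simp
    _ ≤ #(D.image (colorClass β)) := card_le_card fun o ho => by
        obtain ⟨k, -, rfl⟩ := mem_map.1 ho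
        obtain ⟨x, hx, hxk⟩ := exists_mem_colorClass_eq hD (Function.surjInv hβ ∘ k)
        rw [← Function.comp_assoc, Function.comp_surjInv, Function.id_comp] at hxk
        exact mem_image.2 ⟨x, hx, hxk⟩
    _ ≤ #D := card_image_le

variable [Fintype B] [DecidableRel E]

theorem exists_inr_inr_mem (hD : IsDominatingSet (Gc c t Δ s d α β E) D) {i : Fin t} {q : ℕ}
    (hq : q ≤ Δ * s) {v : Fin c → B} (hv : ∀ ℓ, v ℓ ∉ colorRich α E (cSlice D i ℓ) q)
    (hagree : ∀ v' ∈ vPart D, β ∘ v' = β ∘ v → ∃ ℓ, v ℓ = v' ℓ) :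
    ∃ j, .inr (.inr (v, j, i)) ∈ D := by
  choose j hj using fun ℓ => exists_ne_of_notMem_colorRich (hv ℓ) (by simpa using hq)
  refine ⟨j, (hD _).resolve_right ?_⟩
  rintro ⟨x, hx, hadj⟩
  rcases of_adj_inr_inr hadj with ⟨v', rfl, hβv', hne⟩ | ⟨u, ℓ, rfl, hE, hju⟩
  · obtain ⟨ℓ, hℓ⟩ := hagree v' (by simpa using hx) hβv'
    exact hne ℓ hℓ
  · exact hj ℓ u (by simpa using hx) hE hju.symm

theorem some_mem_image_colorClass (hβ : Function.Surjective β)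
    (hD : IsDominatingSet (Gc c t Δ s d α β E) D) {i : Fin t} {q : ℕ} (hq : q ≤ Δ * s)
    {k : Fin c → Fin d} (hk : ∀ ℓ, k ℓ ∉ (colorRich α E (cSlice D i ℓ) q).image β)
    (hreps : #{v ∈ vPart D | β ∘ v = k} < c) :
    some k ∈ {x ∈ D | layer x = some i}.image (colorClass β) := by
  let P : Fin c → B → Prop := fun ℓ b => β b = k ℓ ∧ b ∉ colorRich α E (cSlice D i ℓ) q
  have hP : ∀ ℓ b, β b = k ℓ → P ℓ b := fun ℓ b hb =>
    ⟨hb, fun hO => hk ℓ (mem_image.2 ⟨b, hO, hb⟩)⟩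
  obtain ⟨v, hvP, hvR⟩ := exists_forall_exists_apply_eq_of_card_le P
    {v ∈ vPart D | β ∘ v = k} (by simpa using hreps.le)
    (fun r hr ℓ => hP ℓ _ (congrFun (mem_filter.1 hr).2 ℓ))
    (Function.surjInv hβ ∘ k) (fun ℓ => hP ℓ _ (Function.surjInv_eq hβ _))
  have hβv : β ∘ v = k := funext fun ℓ => (hvP ℓ).1
  obtain ⟨j, hj⟩ := exists_inr_inr_mem hD hq (fun ℓ => (hvP ℓ).2)
    fun v' hv' hβv' => hvR v' (mem_filter.2 ⟨hv', hβv'.trans hβv⟩)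
  exact mem_image.2 ⟨_, mem_filter.2 ⟨hj, rfl⟩, by simp [colorClass, hβv]⟩

theorem pow_le_card_filter_layer_add (hβ : Function.Surjective β)
    (hD : IsDominatingSet (Gc c t Δ s d α β E) D) (hc : 0 < c) (i : Fin t) {q N : ℕ}
    (hq : q ≤ Δ * s) (hN : ∀ ℓ, #(colorRich α E (cSlice D i ℓ) q) ≤ N) :
    d ^ c ≤ #{x ∈ D | layer x = some i} + c * N * d ^ (c - 1) + #D / c := by
  set good : Finset (Fin c → Fin d) :=
    {k | some k ∈ {x ∈ D | layer x = some i}.image (colorClass β)}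
  set touched : Finset (Fin c → Fin d) :=
    {k | ∃ ℓ, k ℓ ∈ (colorRich α E (cSlice D i ℓ) q).image β}
  set heavy : Finset (Fin c → Fin d) := {k | c ≤ #{v ∈ vPart D | β ∘ v = k}}
  have hgood : #good ≤ #{x ∈ D | layer x = some i} :=
    calc #good = #(good.map .some) := (card_map _).symm
      _ ≤ #({x ∈ D | layer x = some i}.image (colorClass β)) :=
          card_le_card fun o ho => by
            obtain ⟨k, hk, rfl⟩ := mem_map.1 ho
            exact (mem_filter.1 hk).2
      _ ≤ _ := card_image_le
  have htouched : #touched ≤ c * N * d ^ (c - 1) := by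
    convert card_filter_exists_apply_mem_le (fun ℓ => (colorRich α E (cSlice D i ℓ) q).image β)
      fun ℓ => card_image_le.trans (hN ℓ) using 2
    · ext k; simp [touched]
    all_goals simp
  have hheavy : #heavy ≤ #D / c := (Nat.le_div_iff_mul_le hc).2 <| by
    rw [mul_comm]
    exact (mul_card_filter_le_card_filter_le _ _ _).trans card_vPart_le
  calc d ^ c = #(univ : Finset (Fin c → Fin d)) := by simp
    _ ≤ #(good ∪ touched ∪ heavy) := card_le_card fun k _ => by
        by_contra hk
        simp only [good, touched, heavy, mem_union, mem_filter, mem_univ, true_and, not_or,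
          not_exists, not_le] at hk
        exact hk.1.1 (some_mem_image_colorClass hβ hD hq hk.1.2 hk.2)
    _ ≤ #good + #touched + #heavy := (card_union_le _ _).trans (by gcongr; exact card_union_le _ _)
    _ ≤ _ := by gcongr

theorem card_colorRich_cSlice_le [DecidableEq B] {i : Fin t} {ℓ : Fin c} {q m : ℕ}
    (hcommon : ∀ T : Finset A, #T = q → #{b | ∀ u ∈ T, E u b} ≤ m) :
    #(colorRich α E (cSlice D i ℓ) q) ≤ #{x ∈ D | layer x = some i} ^ q * m :=
  (card_colorRich_le fun T _ hT => hcommon T hT).trans <| by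
    gcongr
    exact (Nat.choose_le_pow _ _).trans (Nat.pow_le_pow_left (card_cSlice_le i ℓ) q)

end Gc

theorem soundness_Gc_general {A B : Type*} [Fintype A] [Fintype B]
    (c t Δ s d : ℕ) (ht : 0 < t) (hΔ : 0 < Δ) (hs : 2 ≤ s)
    (hd : 0 < d)
    (α : A → Fin (Δ * s)) (β : B → Fin d) (E : A → B → Prop)
    (hβsurj : ∀ b : Fin d, ∃ v : B, β v = b)
    (m : ℕ)
    (hcommon : ∀ S : Finset A, S.card = Δ * (s - 1) + 1 →
      {v : B | ∀ u ∈ S, E u v}.ncard ≤ m)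
    (h1 : (c : ℝ) * (d : ℝ) ^ c / (3 * t) ≤
      (d : ℝ) ^ ((1 : ℝ) / (2 * Δ * s)))
    (h2 : (m : ℝ) ≤ (d : ℝ) ^ ((1 : ℝ) / (2 * s)) / 3)
    (h3 : (c : ℝ) * (d : ℝ) ^ c +
        (c : ℝ) * (Δ : ℝ) ^ c * (s : ℝ) ^ c *
          (d : ℝ) ^ ((c : ℝ) - 1 / 2 + 1 / (2 * s)) <
      2 * (Δ : ℝ) ^ c * (d : ℝ) ^ c)
    (D : Set (GcVertex A B c t Δ s))
    (hD : IsDominatingSet (Gc c t Δ s d α β E) D) :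
    (c : ℝ) * (d : ℝ) ^ c / 3 < (D.ncard : ℝ) := by
  classical
  obtain ⟨D, rfl⟩ := D.toFinite.exists_finset_coe
  rw [Set.ncard_coe_finset]
  by_contra! hsmall
  have hdc : (d : ℝ) ^ c ≤ #D := by exact_mod_cast Gc.pow_le_card hβsurj hD
  have hc : 3 ≤ c := by
    have : (0 : ℝ) < d ^ c := by positivity
    exact_mod_cast (by nlinarith : (3 : ℝ) ≤ c)
  have : Nonempty (Fin t) := ⟨⟨0, ht⟩⟩
  obtain ⟨i, hi⟩ := exists_mul_card_filter_eq_some_le D Gc.layer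
  have hL : (#{x ∈ D | Gc.layer x = some i} : ℝ) ≤ d ^ ((1 : ℝ) / (2 * Δ * s)) := by
    refine le_trans ?_ h1
    rw [le_div_iff₀ (by positivity)]
    have : (t * #{x ∈ D | Gc.layer x = some i} : ℝ) ≤ #D := by
      rw [Fintype.card_fin] at hi; exact_mod_cast hi
    nlinarith
  have hq : Δ * (s - 1) + 1 ≤ Δ * s := by
    rw [Nat.mul_sub, mul_one]; have := Nat.le_mul_of_pos_right Δ (by omega : 0 < s); omega
  have hcount := Gc.pow_le_card_filter_layer_add hβsurj hD (by omega) i hq fun ℓ =>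
    Gc.card_colorRich_cSlice_le fun T hT =>
      le_of_eq_of_le (by rw [← Set.ncard_coe_finset]; congr; ext; simp) (hcommon T hT)
  have hheavy : ((#D / c : ℕ) : ℝ) ≤ d ^ c / 3 := Nat.cast_div_le.trans <| by
    rw [div_le_iff₀ (by positivity)]; linarith
  have hlt := add_mul_pow_add_third_lt_pow_of_rpow_le hc hs hΔ hq (by exact_mod_cast hd) hL h2 h3
  have hcount' := (Nat.cast_le (α := ℝ)).2 hcount
  push_cast at hcount' hlt
  linarith

/-- soundness of the product reduction.
Assume `s ≥ 2`, every color class `{v ∈ B : β v = b}` is nonempty, and every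
`(Δ(s−1)+1)`-element subset of `A` has at most `m` common neighbors in `B`.
Under the numerical conditions `c·d^c/(3t) ≤ d^{1/(2Δs)}`, `m ≤ d^{1/(2s)}/3`
and `c·d^c + c·Δ^c·s^c·d^{c−1/2+1/(2s)} < 2·Δ^c·d^c`, every dominating set of
`G_c` has size `> c·d^c/3`. -/
theorem soundness_Gc {A B : Type*} [Fintype A] [Fintype B]
    (c t Δ s d : ℕ) (hc : 0 < c) (ht : 0 < t) (hΔ : 0 < Δ) (hs : 2 ≤ s)
    (hd : 0 < d)
    (α : A → Fin (Δ * s)) (β : B → Fin d) (E : A → B → Prop)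
    (hβsurj : ∀ b : Fin d, ∃ v : B, β v = b)
    (m : ℕ)
    (hcommon : ∀ S : Finset A, S.card = Δ * (s - 1) + 1 →
      {v : B | ∀ u ∈ S, E u v}.ncard ≤ m)
    (h1 : (c : ℝ) * (d : ℝ) ^ c / (3 * t) ≤
      (d : ℝ) ^ ((1 : ℝ) / (2 * Δ * s)))
    (h2 : (m : ℝ) ≤ (d : ℝ) ^ ((1 : ℝ) / (2 * s)) / 3)
    (h3 : (c : ℝ) * (d : ℝ) ^ c +
        (c : ℝ) * (Δ : ℝ) ^ c * (s : ℝ) ^ c *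
          (d : ℝ) ^ ((c : ℝ) - 1 / 2 + 1 / (2 * s)) <
      2 * (Δ : ℝ) ^ c * (d : ℝ) ^ c)
    (D : Set (GcVertex A B c t Δ s))
    (hD : IsDominatingSet (Gc c t Δ s d α β E) D) :
    (c : ℝ) * (d : ℝ) ^ c / 3 < (D.ncard : ℝ) :=
  soundness_Gc_general c t Δ s d ht hΔ hs hd α β E hβsurj m hcommon h1 h2 h3 D hD
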